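/- arXiv:1302.5187 — 2 statements merged into one kernel-verified Lean document; each statement's English description precedes it below -/
import Mathlib

section
/- Let (S,T),(U,V) be a twin cotorsion pair on B. If A ↣ B ↠ U is a short exact sequence with U ∈ U and A ∈ B⁻, then B ∈ B⁻. -/
open CategoryTheory Limits

universe v u

/-- An exact structure (Quillen exact category) on an additive category `C`:
a class of kernel-cokernel pairs (short exact sequences) satisfying Quillen's axioms. -/
structure ExactStructure (C : Type u) [Category.{v} C] [Preadditive C] where
  ses : ∀ ⦃X Y Z : C⦄, (X ⟶ Y) → (Y ⟶ Z) → Prop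
  comp_zero : ∀ ⦃X Y Z : C⦄ ⦃i : X ⟶ Y⦄ ⦃d : Y ⟶ Z⦄, ses i d → i ≫ d = 0
  is_kernel : ∀ ⦃X Y Z : C⦄ ⦃i : X ⟶ Y⦄ ⦃d : Y ⟶ Z⦄, ses i d →
    ∀ ⦃W : C⦄ (g : W ⟶ Y), g ≫ d = 0 → ∃! h : W ⟶ X, h ≫ i = g
  is_cokernel : ∀ ⦃X Y Z : C⦄ ⦃i : X ⟶ Y⦄ ⦃d : Y ⟶ Z⦄, ses i d →
    ∀ ⦃W : C⦄ (g : Y ⟶ W), i ≫ g = 0 → ∃! h : Z ⟶ W, d ≫ h = g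
  id_infl : ∀ X : C, ∃ (Z : C) (d : X ⟶ Z), ses (𝟙 X) d
  id_defl : ∀ X : C, ∃ (W : C) (i : W ⟶ X), ses i (𝟙 X)
  infl_comp : ∀ ⦃X Y Z : C⦄ (i : X ⟶ Y) (j : Y ⟶ Z),
    (∃ (A : C) (d : Y ⟶ A), ses i d) → (∃ (B : C) (e : Z ⟶ B), ses j e) →
    ∃ (A : C) (d : Z ⟶ A), ses (i ≫ j) d
  defl_comp : ∀ ⦃X Y Z : C⦄ (p : X ⟶ Y) (q : Y ⟶ Z),
    (∃ (A : C) (i : A ⟶ X), ses i p) → (∃ (B : C) (j : B ⟶ Y), ses j q) →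
    ∃ (A : C) (i : A ⟶ X), ses i (p ≫ q)
  pullback_defl : ∀ ⦃X Y Z : C⦄ ⦃i : X ⟶ Y⦄ ⦃d : Y ⟶ Z⦄, ses i d → ∀ ⦃Z' : C⦄ (f : Z' ⟶ Z),
    ∃ (Y' : C) (d' : Y' ⟶ Z') (g : Y' ⟶ Y), (∃ (X' : C) (i' : X' ⟶ Y'), ses i' d') ∧
      IsPullback d' g f d
  pushout_infl : ∀ ⦃X Y Z : C⦄ ⦃i : X ⟶ Y⦄ ⦃d : Y ⟶ Z⦄, ses i d → ∀ ⦃X' : C⦄ (g : X ⟶ X'),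
    ∃ (Y' : C) (i' : X' ⟶ Y') (g' : Y ⟶ Y'), (∃ (Z' : C) (d' : Y' ⟶ Z'), ses i' d') ∧
      IsPushout i g g' i'

variable {C : Type u} [Category.{v} C] [Preadditive C] [HasBinaryBiproducts C]

/-- `i` is an inflation (admissible monomorphism). -/
def ExactStructure.Inflation (E : ExactStructure C) {X Y : C} (i : X ⟶ Y) : Prop :=
  ∃ (Z : C) (d : Y ⟶ Z), E.ses i d

/-- `d` is a deflation (admissible epimorphism). -/
def ExactStructure.Deflation (E : ExactStructure C) {Y Z : C} (d : Y ⟶ Z) : Prop :=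
  ∃ (X : C) (i : X ⟶ Y), E.ses i d

/-- `Ext^1(X, Y) = 0`: every short exact sequence `Y ↣ M ↠ X` splits. -/
def ExactStructure.Ext1Zero (E : ExactStructure C) (X Y : C) : Prop :=
  ∀ ⦃M : C⦄ (i : Y ⟶ M) (d : M ⟶ X), E.ses i d → ∃ r : M ⟶ Y, i ≫ r = 𝟙 Y

/-- `P` is projective with respect to the exact structure. -/
def ExactStructure.Proj (E : ExactStructure C) (P : C) : Prop :=
  ∀ ⦃Y Z : C⦄ (d : Y ⟶ Z), E.Deflation d → ∀ g : P ⟶ Z, ∃ h : P ⟶ Y, h ≫ d = g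

/-- `I` is injective with respect to the exact structure. -/
def ExactStructure.Inj (E : ExactStructure C) (I : C) : Prop :=
  ∀ ⦃X Y : C⦄ (i : X ⟶ Y), E.Inflation i → ∀ g : X ⟶ I, ∃ h : Y ⟶ I, i ≫ h = g

def ExactStructure.EnoughProj (E : ExactStructure C) : Prop :=
  ∀ X : C, ∃ (P : C) (p : P ⟶ X), E.Proj P ∧ E.Deflation p

def ExactStructure.EnoughInj (E : ExactStructure C) : Prop :=
  ∀ X : C, ∃ (I : C) (i : X ⟶ I), E.Inj I ∧ E.Inflation i

/-- A class of objects is closed under direct summands (retracts). -/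
def ClosedUnderSummands (U : Set C) : Prop :=
  ∀ ⦃X Y : C⦄ (s : Y ⟶ X) (r : X ⟶ Y), s ≫ r = 𝟙 Y → X ∈ U → Y ∈ U

/-- A cotorsion pair `(U, V)` on an exact category. -/
structure IsCotorsionPair (E : ExactStructure C) (U V : Set C) : Prop where
  ext1 : ∀ ⦃A B : C⦄, A ∈ U → B ∈ V → E.Ext1Zero A B
  approx_left : ∀ B : C, ∃ (VB UB : C) (i : VB ⟶ UB) (d : UB ⟶ B),
    VB ∈ V ∧ UB ∈ U ∧ E.ses i d
  approx_right : ∀ B : C, ∃ (VB UB : C) (i : B ⟶ VB) (d : VB ⟶ UB),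
    VB ∈ V ∧ UB ∈ U ∧ E.ses i d
  summands_left : ClosedUnderSummands U
  summands_right : ClosedUnderSummands V

/-- The subcategory `B⁺` of a twin cotorsion pair, where `W = T ∩ U`. -/
def BPlus (E : ExactStructure C) (V W : Set C) : Set C :=
  fun B => ∃ (V' W' : C) (i : V' ⟶ W') (d : W' ⟶ B), V' ∈ V ∧ W' ∈ W ∧ E.ses i d

/-- The subcategory `B⁻` of a twin cotorsion pair, where `W = T ∩ U`. -/
def BMinus (E : ExactStructure C) (W S : Set C) : Set C :=
  fun B => ∃ (W' S' : C) (i : B ⟶ W') (d : W' ⟶ S'), W' ∈ W ∧ S' ∈ S ∧ E.ses i d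

/-- `f` factors through an object of `W`. -/
def FactorsThru (W : Set C) {X Y : C} (f : X ⟶ Y) : Prop :=
  ∃ (Z : C) (u : X ⟶ Z) (v : Z ⟶ Y), Z ∈ W ∧ u ≫ v = f

/-! Pushing `A ↣ W' ↠ S'` out along `A ↣ B` gives `B ↣ P ↠ S'`. The same `P` is the pushout
of `A ↣ B ↠ U0` along `A ↣ W'`, hence an extension of `U0` by `W'`, so `P ∈ U` because the
left class of a cotorsion pair is closed under extensions. For an `(S, T)`-approximation
`P ↣ T' ↠ S''` we get `T' ∈ U` in the same way (as `S ⊆ U`), and the cokernel of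
`B ↣ P ↣ T'` is an extension of `S''` by `S'`, hence lies in `S`. -/

section

omit [HasBinaryBiproducts C]

namespace ExactStructure

variable (E : ExactStructure C) {X Y Z : C} {i : X ⟶ Y} {d : Y ⟶ Z}

theorem epi_of_ses (hs : E.ses i d) : Epi d where
  left_cancellation a b h := by
    obtain ⟨_, -, huniq⟩ := E.is_cokernel hs (d ≫ a)
      (by rw [← Category.assoc, E.comp_zero hs, zero_comp])
    exact (huniq a rfl).trans (huniq b h.symm).symm

theorem mono_of_ses (hs : E.ses i d) : Mono i where
  right_cancellation a b h := by
    obtain ⟨_, -, huniq⟩ := E.is_kernel hs (a ≫ i)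
      (by rw [Category.assoc, E.comp_zero hs, Limits.comp_zero])
    exact (huniq a rfl).trans (huniq b h.symm).symm

theorem exists_section_of_retraction (hs : E.ses i d) {r : Y ⟶ X} (hr : i ≫ r = 𝟙 X) :
    ∃ s : Z ⟶ Y, s ≫ d = 𝟙 Z := by
  have := E.epi_of_ses hs
  obtain ⟨s, hs', -⟩ := E.is_cokernel hs (𝟙 Y - r ≫ i) (by simp [reassoc_of% hr])
  exact ⟨s, (cancel_epi d).1 (by simp [reassoc_of% hs', E.comp_zero hs])⟩

theorem nonempty_iso_of_isPushout (hs : E.ses i d) {X' Y' Z' : C} {g : X ⟶ X'} {g' : Y ⟶ Y'}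
    {i' : X' ⟶ Y'} (hPO : IsPushout i g g' i') {d' : Y' ⟶ Z'} (hs' : E.ses i' d') :
    Nonempty (Z ≅ Z') := by
  have := E.epi_of_ses hs
  have := E.epi_of_ses hs'
  obtain ⟨u, hu, -⟩ := E.is_cokernel hs (g' ≫ d')
    (by rw [← Category.assoc, hPO.w, Category.assoc, E.comp_zero hs', Limits.comp_zero])
  let q : Y' ⟶ Z := hPO.desc d 0 (by rw [E.comp_zero hs, Limits.comp_zero])
  obtain ⟨v, hv, -⟩ := E.is_cokernel hs' q (hPO.inr_desc _ _ _)
  have hqu : q ≫ u = d' := hPO.hom_ext (by simp [q, hu]) (by simp [q, E.comp_zero hs'])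
  refine ⟨⟨u, v, (cancel_epi d).1 ?_, (cancel_epi d').1 ?_⟩⟩
  · rw [reassoc_of% hu, hv, hPO.inl_desc, Category.comp_id]
  · rw [reassoc_of% hv, hqu, Category.comp_id]

theorem isPushout_of_ses_comp (hs : E.ses i d) {W Z' : C} {j : Y ⟶ W} {e : W ⟶ Z'}
    (hcomp : E.ses (i ≫ j) e) {a : Z ⟶ Z'} (ha : d ≫ a = j ≫ e) : IsPushout j d e a := by
  have := E.epi_of_ses hs
  have := E.epi_of_ses hcomp
  have hdesc (s : PushoutCocone j d) : ∃ h : Z' ⟶ s.pt, e ≫ h = s.inl :=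
    (E.is_cokernel hcomp s.inl (by
      rw [Category.assoc, s.condition, ← Category.assoc, E.comp_zero hs, zero_comp])).exists
  choose desc hdesc using hdesc
  refine IsPushout.of_isColimit' ⟨ha.symm⟩
    (PushoutCocone.IsColimit.mk _ desc hdesc (fun s => ?_) (fun s m hm _ => ?_))
  · exact (cancel_epi d).1 (by rw [reassoc_of% ha, hdesc, s.condition])
  · exact (cancel_epi e).1 (by rw [hm, hdesc])

end ExactStructure

omit [Preadditive C] in
theorem ClosedUnderSummands.mem_of_iso {U : Set C} (hU : ClosedUnderSummands U)
    {X Y : C} (e : X ≅ Y) (hX : X ∈ U) : Y ∈ U :=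
  hU e.inv e.hom e.inv_hom_id hX

theorem ClosedUnderSummands.mem_of_isPushout {U : Set C} (hU : ClosedUnderSummands U)
    {E : ExactStructure C} {X Y Z X' Y' Z' : C} {i : X ⟶ Y} {d : Y ⟶ Z} (hs : E.ses i d)
    {g : X ⟶ X'} {g' : Y ⟶ Y'} {i' : X' ⟶ Y'} (hPO : IsPushout i g g' i') {d' : Y' ⟶ Z'}
    (hs' : E.ses i' d') (hZ : Z ∈ U) : Z' ∈ U :=
  hU.mem_of_iso (E.nonempty_iso_of_isPushout hs hPO hs').some hZ

namespace IsCotorsionPair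

variable {E : ExactStructure C} {U V : Set C} (hUV : IsCotorsionPair E U V)
include hUV

theorem mem_left_of_ext1Zero {X : C} (h : ∀ V₀ ∈ V, E.Ext1Zero X V₀) : X ∈ U := by
  obtain ⟨VX, UX, i, d, hV, hU, hs⟩ := hUV.approx_left X
  obtain ⟨r, hr⟩ := h VX hV i d hs
  obtain ⟨s, hsd⟩ := E.exists_section_of_retraction hs hr
  exact hUV.summands_left s d hsd hU

theorem exists_extension {M N Z V₀ : C} {m : M ⟶ N} {q : N ⟶ Z} (hs : E.ses m q)
    (hZ : Z ∈ U) (hV₀ : V₀ ∈ V) (ρ : M ⟶ V₀) : ∃ t : N ⟶ V₀, m ≫ t = ρ := by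
  obtain ⟨Q, j, g, ⟨Z', d, hs'⟩, hPO⟩ := E.pushout_infl hs ρ
  obtain ⟨r, hr⟩ := hUV.ext1 (hUV.summands_left.mem_of_isPushout hs hPO hs' hZ) hV₀ j d hs'
  exact ⟨g ≫ r, by rw [reassoc_of% hPO.w, hr, Category.comp_id]⟩

theorem ext1Zero_of_ses {X Y Z V₀ : C} {i : X ⟶ Y} {d : Y ⟶ Z} (hs : E.ses i d) (hX : X ∈ U)
    (hZ : Z ∈ U) (hV₀ : V₀ ∈ V) : E.Ext1Zero Y V₀ := by
  intro N j p hjp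
  have := E.mono_of_ses hs
  have := E.mono_of_ses hjp
  -- `Ext¹(X, V₀) = 0`, applied to the pullback of `V₀ ↣ N ↠ Y` along `i`, gives a retraction
  -- of `V₀` inside the kernel `M` of `N ↠ Z`; `Ext¹(Z, V₀) = 0` extends it from `M` to `N`.
  obtain ⟨N₁, p₁, g₁, ⟨K, k, hk⟩, hPB⟩ := E.pullback_defl hjp i
  obtain ⟨φ, hφ, -⟩ := E.is_kernel hjp (k ≫ g₁)
    (by rw [Category.assoc, ← hPB.w, reassoc_of% E.comp_zero hk, zero_comp])
  obtain ⟨σ, hσ⟩ := hUV.exists_extension hk hX hV₀ φ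
  obtain ⟨M, m, hm⟩ := E.defl_comp p d ⟨V₀, j, hjp⟩ ⟨X, i, hs⟩
  obtain ⟨ĵ, hĵ, -⟩ := E.is_kernel hm j (by rw [reassoc_of% E.comp_zero hjp, zero_comp])
  obtain ⟨π, hπ, -⟩ := E.is_kernel hs (m ≫ p) (by rw [Category.assoc, E.comp_zero hm])
  let c : M ⟶ N₁ := hPB.lift π m hπ
  have hĵπ : ĵ ≫ π = 0 :=
    (cancel_mono i).1 (by rw [Category.assoc, hπ, reassoc_of% hĵ, E.comp_zero hjp, zero_comp])
  obtain ⟨κ, hκ, -⟩ := E.is_kernel hk (ĵ ≫ c) (by simp [c, hĵπ])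
  have hκφ : κ ≫ φ = 𝟙 V₀ :=
    (cancel_mono j).1 (by rw [Category.assoc, hφ, reassoc_of% hκ]; simp [c, hĵ])
  obtain ⟨t, ht⟩ := hUV.exists_extension hm hZ hV₀ (c ≫ σ)
  refine ⟨t, ?_⟩
  calc j ≫ t = ĵ ≫ c ≫ σ := by rw [← hĵ, Category.assoc, ht]
    _ = 𝟙 V₀ := by rw [← reassoc_of% hκ, hσ, hκφ]

theorem mem_left_of_ses {X Y Z : C} {i : X ⟶ Y} {d : Y ⟶ Z} (hs : E.ses i d) (hX : X ∈ U)
    (hZ : Z ∈ U) : Y ∈ U :=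
  hUV.mem_left_of_ext1Zero fun _ hV₀ => hUV.ext1Zero_of_ses hs hX hZ hV₀

theorem mem_left_of_ses_comp {X Y Y' Z Z' Z'' : C} {i : X ⟶ Y} {d : Y ⟶ Z} {j : Y ⟶ Y'}
    {e : Y' ⟶ Z'} {e' : Y' ⟶ Z''} (hs : E.ses i d) (hs' : E.ses j e)
    (hcomp : E.ses (i ≫ j) e') (hZ : Z ∈ U) (hZ' : Z' ∈ U) : Z'' ∈ U := by
  obtain ⟨a, ha, -⟩ := E.is_cokernel hs (j ≫ e') (by rw [← Category.assoc, E.comp_zero hcomp])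
  -- `Z''` is also the pushout of `Y' ↢ Y ↠ Z`, an extension of a copy of `Z'` by `Z`
  obtain ⟨Q, k, g, ⟨Z₀, d₀, hs₀⟩, hPO⟩ := E.pushout_infl hs' d
  have hQ : Q ∈ U :=
    hUV.mem_left_of_ses hs₀ hZ (hUV.summands_left.mem_of_isPushout hs' hPO hs₀ hZ')
  exact hUV.summands_left.mem_of_iso
    (hPO.isoIsPushout _ _ (E.isPushout_of_ses_comp hs hcomp ha)) hQ

end IsCotorsionPair

end

theorem bminus_closed_under_u_extension_general
    (E : ExactStructure C)
    {S T U V : Set C} (hST : IsCotorsionPair E S T) (hUV : IsCotorsionPair E U V)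
    (hSU : S ⊆ U)
    {A B U0 : C} {f : A ⟶ B} {g : B ⟶ U0}
    (hses : E.ses f g) (hU0 : U0 ∈ U)
    (hA : A ∈ BMinus E (T ∩ U) S) :
    B ∈ BMinus E (T ∩ U) S := by
  obtain ⟨W', S', iA, dA, ⟨-, hW'⟩, hS', hsA⟩ := hA
  obtain ⟨P, iB, gP, ⟨Z, d, hs⟩, hPO⟩ := E.pushout_infl hsA f
  have hZ : Z ∈ S := hST.summands_left.mem_of_isPushout hsA hPO hs hS'
  -- the same pushout `P`, now seen as an extension of a copy of `U0` by `W'`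
  obtain ⟨P', iW, gB, ⟨Z', d', hs'⟩, hPO'⟩ := E.pushout_infl hses iA
  have hP' : P' ∈ U :=
    hUV.mem_left_of_ses hs' hW' (hUV.summands_left.mem_of_isPushout hses hPO' hs' hU0)
  have hP : P ∈ U := hUV.summands_left.mem_of_iso (hPO'.flip.isoIsPushout _ _ hPO) hP'
  obtain ⟨T', S'', i', d'', hT', hS'', hs''⟩ := hST.approx_right P
  obtain ⟨S₀, d₀, hs₀⟩ := E.infl_comp iB i' ⟨Z, d, hs⟩ ⟨S'', d'', hs''⟩
  exact ⟨T', S₀, iB ≫ i', d₀, ⟨hT', hUV.mem_left_of_ses hs'' hP (hSU hS'')⟩,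
    hST.mem_left_of_ses_comp hs hs'' hs₀ hZ hS'', hs₀⟩

/-- if `A ↣ B ↠ U` is a short exact sequence with `U ∈ U` and `A ∈ B⁻`,
then `B ∈ B⁻`. -/
theorem bminus_closed_under_u_extension
    (E : ExactStructure C) (hP : E.EnoughProj) (hI : E.EnoughInj)
    {S T U V : Set C} (hST : IsCotorsionPair E S T) (hUV : IsCotorsionPair E U V)
    (hSU : S ⊆ U)
    {A B U0 : C} {f : A ⟶ B} {g : B ⟶ U0}
    (hses : E.ses f g) (hU0 : U0 ∈ U)
    (hA : A ∈ BMinus E (T ∩ U) S) :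
    B ∈ BMinus E (T ∩ U) S :=
  bminus_closed_under_u_extension_general E hST hUV hSU hses hU0 hA
end

section
/- Let (S,T),(U,V) be a twin cotorsion pair on B and let A ↣ B ↠ C be a short exact sequence with A ∈ H = B⁺ ∩ B⁻ (in particular A ∈ B⁻). If the deflation B ↠ C factors through an object of U, then the image of the inflation A ↣ B in the heart H/W is an epimorphism. -/
open CategoryTheory Limits

universe v u

variable {C : Type u} [Category.{v} C] [Preadditive C] [HasBinaryBiproducts C]

/-!
Write `f ≫ r = u ≫ v` with `Z ∈ W`. Since `A ∈ B⁻` there is a conflation `A ↣ W_A ↠ S_A`, and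
`Ext¹(S, T) = 0` extends `u` over `W_A`; so `r` and this extension glue to a map `ρ` out of the
pushout `P` of `A ↣ B` along `A ↣ W_A`. Pulling the conflation `W_A ↣ P ↠ D` back along
`U₀ ⟶ D` gives an extension `E₁` of `U₀` by (a copy of) `W_A`, both in `U`, so `Ext¹(E₁, V) = 0`.
As `B ↠ D` factors through `U₀`, `r` factors through `E₁`, and every map from `E₁` to `Q ∈ B⁺`
lifts along the deflation `W_Q ↠ Q`, whose kernel lies in `V`.
-/

namespace ExactStructure

variable (E : ExactStructure C)

lemma cancel_inflation {X Y Z : C} {i : X ⟶ Y} {d : Y ⟶ Z} (h : E.ses i d)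
    {W : C} {a b : W ⟶ X} (hab : a ≫ i = b ≫ i) : a = b := by
  obtain ⟨c, -, hc⟩ := E.is_kernel h (a ≫ i)
    (by rw [Category.assoc, E.comp_zero h, Limits.comp_zero])
  rw [hc a rfl, hc b hab.symm]

lemma cancel_deflation {X Y Z : C} {i : X ⟶ Y} {d : Y ⟶ Z} (h : E.ses i d)
    {W : C} {a b : Z ⟶ W} (hab : d ≫ a = d ≫ b) : a = b := by
  obtain ⟨c, -, hc⟩ := E.is_cokernel h (d ≫ a)
    (by rw [← Category.assoc, E.comp_zero h, Limits.zero_comp])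
  rw [hc a rfl, hc b hab.symm]

lemma exists_retraction_of_section {K M X : C} {i : K ⟶ M} {d : M ⟶ X} (h : E.ses i d)
    {σ : X ⟶ M} (hσ : σ ≫ d = 𝟙 X) : ∃ ρ : M ⟶ K, i ≫ ρ = 𝟙 K := by
  obtain ⟨ρ, hρ, -⟩ := E.is_kernel h (𝟙 M - d ≫ σ)
    (by rw [Preadditive.sub_comp, Category.id_comp, Category.assoc, hσ, Category.comp_id, sub_self])
  refine ⟨ρ, E.cancel_inflation h ?_⟩
  rw [Category.assoc, hρ, Preadditive.comp_sub, Category.comp_id, ← Category.assoc,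
    E.comp_zero h, Limits.zero_comp, sub_zero, Category.id_comp]

lemma exists_section_of_retraction_s14 {K M X : C} {i : K ⟶ M} {d : M ⟶ X} (h : E.ses i d)
    {ρ : M ⟶ K} (hρ : i ≫ ρ = 𝟙 K) : ∃ σ : X ⟶ M, σ ≫ d = 𝟙 X := by
  obtain ⟨σ, hσ, -⟩ := E.is_cokernel h (𝟙 M - ρ ≫ i)
    (by rw [Preadditive.comp_sub, Category.comp_id, ← Category.assoc, hρ, Category.id_comp,
      sub_self])
  refine ⟨σ, E.cancel_deflation h ?_⟩
  rw [← Category.assoc, hσ, Preadditive.sub_comp, Category.id_comp, Category.assoc,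
    E.comp_zero h, Limits.comp_zero, sub_zero, Category.comp_id]

lemma exists_ses_isPullback {K M Y : C} {i : K ⟶ M} {d : M ⟶ Y} (h : E.ses i d)
    {Y' : C} (j : Y' ⟶ Y) :
    ∃ (M' : C) (d' : M' ⟶ Y') (j' : M' ⟶ M) (K' : C) (i' : K' ⟶ M') (_ : K' ≅ K),
      E.ses i' d' ∧ IsPullback d' j' j d := by
  obtain ⟨M', d', j', ⟨K', i', h'⟩, hpb⟩ := E.pullback_defl h j
  obtain ⟨κ, hκ, -⟩ := E.is_kernel h (i' ≫ j')
    (by rw [Category.assoc, ← hpb.w, ← Category.assoc, E.comp_zero h', Limits.zero_comp])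
  have hi : (0 : K ⟶ Y') ≫ j = i ≫ d := by rw [Limits.zero_comp, E.comp_zero h]
  obtain ⟨μ, hμ, -⟩ := E.is_kernel h' (hpb.lift 0 i hi) (hpb.lift_fst _ _ _)
  have hμκ : μ ≫ κ = 𝟙 K :=
    E.cancel_inflation h
      (by rw [Category.assoc, hκ, reassoc_of% hμ, hpb.lift_snd, Category.id_comp])
  have hκμ : κ ≫ μ = 𝟙 K' := by
    refine E.cancel_inflation h' (hpb.hom_ext ?_ ?_)
    · simp [E.comp_zero h']
    · rw [Category.assoc, Category.assoc, reassoc_of% hμ, hpb.lift_snd, hκ, Category.id_comp]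
  exact ⟨M', d', j', K', i', ⟨κ, μ, hκμ, hμκ⟩, h', hpb⟩

lemma exists_ses_isPushout {X Y Z : C} {i : X ⟶ Y} {d : Y ⟶ Z} (h : E.ses i d)
    {X' : C} (u : X ⟶ X') :
    ∃ (Y' : C) (i' : X' ⟶ Y') (u' : Y ⟶ Y') (Z' : C) (d' : Y' ⟶ Z') (ψ : Z ≅ Z'),
      E.ses i' d' ∧ IsPushout i u u' i' ∧ d ≫ ψ.hom = u' ≫ d' := by
  obtain ⟨Y', i', u', ⟨Z', d', h'⟩, hpo⟩ := E.pushout_infl h u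
  obtain ⟨ψ, hψ, -⟩ := E.is_cokernel h (u' ≫ d')
    (by rw [← Category.assoc, hpo.w, Category.assoc, E.comp_zero h', Limits.comp_zero])
  have hd : i ≫ d = u ≫ (0 : X' ⟶ Z) := by rw [E.comp_zero h, Limits.comp_zero]
  obtain ⟨χ, hχ, -⟩ := E.is_cokernel h' (hpo.desc d 0 hd) (hpo.inr_desc _ _ _)
  have hψχ : ψ ≫ χ = 𝟙 Z :=
    E.cancel_deflation h (by rw [reassoc_of% hψ, hχ, hpo.inl_desc, Category.comp_id])
  have hχψ : χ ≫ ψ = 𝟙 Z' := by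
    refine E.cancel_deflation h' (hpo.hom_ext ?_ ?_)
    · rw [reassoc_of% hχ, hpo.inl_desc_assoc, hψ, Category.comp_id]
    · rw [reassoc_of% hχ, hpo.inr_desc_assoc, Limits.zero_comp, Category.comp_id,
        E.comp_zero h']
  exact ⟨Y', i', u', Z', d', ⟨ψ, χ, hψχ, hχψ⟩, h', hpo, hψ⟩

def leftPerp (V : Set C) : Set C :=
  {X | ∀ ⦃K : C⦄, K ∈ V → E.Ext1Zero X K}

section leftPerp

variable {E} {V : Set C}

lemma exists_lift_of_mem_leftPerp (hV : ClosedUnderSummands V) {K M Y : C} {i : K ⟶ M}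
    {d : M ⟶ Y} (h : E.ses i d) (hK : K ∈ V) {X : C} (hX : X ∈ E.leftPerp V) (ξ : X ⟶ Y) :
    ∃ l : X ⟶ M, l ≫ d = ξ := by
  obtain ⟨M', d', j', K', i', e, h', hpb⟩ := E.exists_ses_isPullback h ξ
  obtain ⟨ρ, hρ⟩ := hX (hV e.hom e.inv e.hom_inv_id hK) i' d' h'
  obtain ⟨σ, hσ⟩ := E.exists_section_of_retraction_s14 h' hρ
  exact ⟨σ ≫ j', by rw [Category.assoc, ← hpb.w, reassoc_of% hσ]⟩

lemma leftPerp_closedUnderSummands (hV : ClosedUnderSummands V) :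
    ClosedUnderSummands (E.leftPerp V) := by
  intro X Y s r hsr hX K hK M i d h
  obtain ⟨l, hl⟩ := exists_lift_of_mem_leftPerp hV h hK hX r
  exact E.exists_retraction_of_section h (σ := s ≫ l) (by rw [Category.assoc, hl, hsr])

lemma mem_leftPerp_of_ses (hV : ClosedUnderSummands V) (hI : E.EnoughInj) {X₁ X₂ X₃ : C}
    {a : X₁ ⟶ X₂} {b : X₂ ⟶ X₃} (hab : E.ses a b) (h₁ : X₁ ∈ E.leftPerp V)
    (h₃ : X₃ ∈ E.leftPerp V) : X₂ ∈ E.leftPerp V := by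
  intro K hK M i d h
  obtain ⟨I, ι, hInj, SK, c, hc⟩ := hI K
  obtain ⟨J, hJ⟩ := hInj i ⟨X₂, d, h⟩ ι
  -- `J ≫ c` descends to `ξ : X₂ ⟶ SK`; lifting `ξ` through `c` corrects `J` to a retraction
  obtain ⟨ξ, hξ, -⟩ := E.is_cokernel h (J ≫ c) (by rw [← Category.assoc, hJ, E.comp_zero hc])
  obtain ⟨l₁, hl₁⟩ := exists_lift_of_mem_leftPerp hV hc hK h₁ (a ≫ ξ)
  obtain ⟨Λ, hΛ⟩ := hInj a ⟨X₃, b, hab⟩ l₁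
  obtain ⟨ξ₃, hξ₃, -⟩ := E.is_cokernel hab (ξ - Λ ≫ c)
    (by rw [Preadditive.comp_sub, ← Category.assoc, hΛ, hl₁, sub_self])
  obtain ⟨l₃, hl₃⟩ := exists_lift_of_mem_leftPerp hV hc hK h₃ ξ₃
  have hlift : (Λ + b ≫ l₃) ≫ c = ξ := by
    rw [Preadditive.add_comp, Category.assoc, hl₃, hξ₃, add_sub_cancel]
  obtain ⟨ρ, hρ, -⟩ := E.is_kernel hc (J - d ≫ (Λ + b ≫ l₃))
    (by rw [Preadditive.sub_comp, Category.assoc, hlift, hξ, sub_self])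
  refine ⟨ρ, E.cancel_inflation hc ?_⟩
  rw [Category.assoc, hρ, Preadditive.comp_sub, hJ, ← Category.assoc, E.comp_zero h,
    Limits.zero_comp, sub_zero, Category.id_comp]

lemma exists_extension_of_mem_leftPerp (hV : ClosedUnderSummands V) {X Y Z : C} {i : X ⟶ Y}
    {d : Y ⟶ Z} (h : E.ses i d) {K : C} (hK : K ∈ V) (hZ : Z ∈ E.leftPerp V) (u : X ⟶ K) :
    ∃ v : Y ⟶ K, i ≫ v = u := by
  obtain ⟨Y', i', u', Z', d', ψ, h', hpo, -⟩ := E.exists_ses_isPushout h u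
  have hZ' : Z' ∈ E.leftPerp V :=
    leftPerp_closedUnderSummands hV ψ.inv ψ.hom ψ.inv_hom_id hZ
  obtain ⟨ρ, hρ⟩ := hZ' hK i' d' h'
  exact ⟨u' ≫ ρ, by rw [← Category.assoc, hpo.w, Category.assoc, hρ, Category.comp_id]⟩

end leftPerp

end ExactStructure

lemma IsCotorsionPair.subset_leftPerp {E : ExactStructure C} {U V : Set C}
    (h : IsCotorsionPair E U V) : U ⊆ E.leftPerp V :=
  fun _ hX _ hK => h.ext1 hX hK

lemma FactorsThru.precomp {W : Set C} {X Y : C} {f : X ⟶ Y} (hf : FactorsThru W f)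
    {X' : C} (g : X' ⟶ X) : FactorsThru W (g ≫ f) :=
  let ⟨Z, u, v, hZ, huv⟩ := hf
  ⟨Z, g ≫ u, v, hZ, by rw [Category.assoc, huv]⟩

lemma factorsThru_of_mem_leftPerp {E : ExactStructure C} {V W : Set C}
    (hV : ClosedUnderSummands V) {X Q : C} (hX : X ∈ E.leftPerp V) (hQ : Q ∈ BPlus E V W)
    (φ : X ⟶ Q) : FactorsThru W φ :=
  let ⟨_, W', _, d, hV', hW', h⟩ := hQ
  let ⟨l, hl⟩ := ExactStructure.exists_lift_of_mem_leftPerp hV h hV' hX φ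
  ⟨W', l, d, hW', hl⟩

theorem inflation_epi_in_heart_general
    (E : ExactStructure C) (hI : E.EnoughInj)
    {S T U V : Set C} (hST : IsCotorsionPair E S T) (hUV : IsCotorsionPair E U V)
    {A B D : C} (f : A ⟶ B) (g : B ⟶ D) (hses : E.ses f g)
    (hA : A ∈ BPlus E V (T ∩ U) ∩ BMinus E (T ∩ U) S)
    (hfac : ∃ (U0 : C) (u1 : B ⟶ U0) (u2 : U0 ⟶ D), U0 ∈ U ∧ u1 ≫ u2 = g) :
    ∀ Q ∈ BPlus E V (T ∩ U) ∩ BMinus E (T ∩ U) S, ∀ r : B ⟶ Q,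
      FactorsThru (T ∩ U) (f ≫ r) → FactorsThru (T ∩ U) r := by
  rintro Q hQ r ⟨Z, u, v, hZ, huv⟩
  obtain ⟨U₀, u₁, u₂, hU₀, rfl⟩ := hfac
  obtain ⟨W_A, S_A, w, _, hW_A, hS_A, hw⟩ := hA.2
  obtain ⟨z, hz⟩ := ExactStructure.exists_extension_of_mem_leftPerp hST.summands_right hw hZ.1
    (hST.subset_leftPerp hS_A) u
  obtain ⟨P, w', g', D', d', ψ, hP, hpo, hψ⟩ := E.exists_ses_isPushout hses w
  let ρ : P ⟶ Q := hpo.desc r (z ≫ v) (by rw [← huv, ← hz, Category.assoc])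
  obtain ⟨E₁, d₁, h₁, X₁, i₁, e, hE₁, hpb⟩ := E.exists_ses_isPullback hP (u₂ ≫ ψ.hom)
  have hX₁ : X₁ ∈ U := hUV.summands_left e.hom e.inv e.hom_inv_id hW_A.2
  have hE₁ : E₁ ∈ E.leftPerp V := ExactStructure.mem_leftPerp_of_ses hUV.summands_right hI hE₁
    (hUV.subset_leftPerp hX₁) (hUV.subset_leftPerp hU₀)
  have hr : hpb.lift u₁ g' (by rw [← Category.assoc, hψ]) ≫ h₁ ≫ ρ = r := by
    rw [hpb.lift_snd_assoc, hpo.inl_desc]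
  rw [← hr]
  exact (factorsThru_of_mem_leftPerp hUV.summands_right hE₁ hQ.1 _).precomp _

/-- if `A ↣ B ↠ C` is a short exact sequence with `A, B` in the heart and the
deflation factoring through `U`, then the inflation `A ↣ B` becomes an epimorphism in the
heart `(B⁺ ∩ B⁻)/W`. -/
theorem inflation_epi_in_heart
    (E : ExactStructure C) (hP : E.EnoughProj) (hI : E.EnoughInj)
    {S T U V : Set C} (hST : IsCotorsionPair E S T) (hUV : IsCotorsionPair E U V)
    (hSU : S ⊆ U)
    {A B D : C} (f : A ⟶ B) (g : B ⟶ D) (hses : E.ses f g)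
    (hA : A ∈ BPlus E V (T ∩ U) ∩ BMinus E (T ∩ U) S)
    (hB : B ∈ BPlus E V (T ∩ U) ∩ BMinus E (T ∩ U) S)
    (hfac : ∃ (U0 : C) (u1 : B ⟶ U0) (u2 : U0 ⟶ D), U0 ∈ U ∧ u1 ≫ u2 = g) :
    ∀ Q ∈ BPlus E V (T ∩ U) ∩ BMinus E (T ∩ U) S, ∀ r : B ⟶ Q,
      FactorsThru (T ∩ U) (f ≫ r) → FactorsThru (T ∩ U) r :=
  inflation_epi_in_heart_general E hI hST hUV f g hses hA hfac
end
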